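/- arXiv:math/0505086 — 8 statements merged into one kernel-verified Lean document; each statement's English description precedes it below -/
import Mathlib

section
/- For every function g : ℕ → ℕ and every g-regressive coloring c : [ℕ]² → ℕ, there is an infinite set B ⊆ ℕ such that the restriction of c to [B]² is min-homogeneous. -/
/-!
Repeated pigeonhole. Above its least element `m`, an infinite set `S` is split by `c m` into
at most `g m + 1` classes, one of which is infinite; pass to it and repeat. The least elements of
the successive sets form `B`: every later element of `B` lies in the class chosen for `m`.
-/

open Set

theorem Set.Infinite.exists_infinite_fiber {α β : Type*} {s : Set α} {t : Set β} {f : α → β}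
    (hs : s.Infinite) (hf : MapsTo f s t) (ht : t.Finite) :
    ∃ b ∈ t, {a ∈ s | f a = b}.Infinite := by
  by_contra! hfin
  refine hs ((ht.biUnion hfin).subset fun a ha ↦ ?_)
  exact mem_biUnion (hf ha) ⟨ha, rfl⟩

namespace MinHomogeneous

variable {β : Type*} {c : ℕ → ℕ → β}

def IsMinHomogeneous (c : ℕ → ℕ → β) (B : Set ℕ) : Prop :=
  ∀ m n n', m ∈ B → n ∈ B → n' ∈ B → m < n → m < n' → c m n = c m n'

theorem exists_infinite_fiber_above (hc : ∀ m, (c m '' Ioi m).Finite) {S : Set ℕ}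
    (hS : S.Infinite) (m : ℕ) : ∃ v, {n ∈ S ∩ Ioi m | c m n = v}.Infinite := by
  have hSm : (S ∩ Ioi m).Infinite :=
    (hS.sdiff (finite_Iic m)).mono fun n hn ↦ ⟨hn.1, not_le.mp (mem_Iic.not.mp hn.2)⟩
  obtain ⟨v, -, hv⟩ :=
    hSm.exists_infinite_fiber (fun n hn ↦ mem_image_of_mem (c m) hn.2) (hc m)
  exact ⟨v, hv⟩

section Construction

variable (hc : ∀ m, (c m '' Ioi m).Finite)

noncomputable def colour (S : {S : Set ℕ // S.Infinite}) : β :=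
  (exists_infinite_fiber_above hc S.2 (sInf S.1)).choose

noncomputable def refine (S : {S : Set ℕ // S.Infinite}) : {S : Set ℕ // S.Infinite} :=
  ⟨{n ∈ S.1 ∩ Ioi (sInf S.1) | c (sInf S.1) n = colour hc S},
    (exists_infinite_fiber_above hc S.2 (sInf S.1)).choose_spec⟩

noncomputable def chain (k : ℕ) : {S : Set ℕ // S.Infinite} :=
  (refine hc)^[k] ⟨univ, infinite_univ⟩

noncomputable def pivot (k : ℕ) : ℕ :=
  sInf (chain hc k).1

theorem chain_succ (k : ℕ) : chain hc (k + 1) = refine hc (chain hc k) :=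
  Function.iterate_succ_apply' _ _ _

theorem antitone_chain : Antitone fun k ↦ (chain hc k).1 :=
  antitone_nat_of_succ_le fun k n hn ↦ by
    rw [chain_succ] at hn
    exact hn.1.1

theorem pivot_mem_chain (k : ℕ) : pivot hc k ∈ (chain hc k).1 :=
  Nat.sInf_mem (chain hc k).2.nonempty

theorem pivot_lt_and_eq_of_mem_chain_succ {k n : ℕ} (hn : n ∈ (chain hc (k + 1)).1) :
    pivot hc k < n ∧ c (pivot hc k) n = colour hc (chain hc k) := by
  rw [chain_succ] at hn
  exact ⟨hn.1.2, hn.2⟩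

theorem strictMono_pivot : StrictMono (pivot hc) :=
  strictMono_nat_of_lt_succ fun k ↦
    (pivot_lt_and_eq_of_mem_chain_succ hc (pivot_mem_chain hc (k + 1))).1

theorem apply_pivot_pivot {i j : ℕ} (hij : i < j) :
    c (pivot hc i) (pivot hc j) = colour hc (chain hc i) :=
  (pivot_lt_and_eq_of_mem_chain_succ hc (antitone_chain hc hij (pivot_mem_chain hc j))).2

end Construction

theorem exists_infinite_isMinHomogeneous (hc : ∀ m, (c m '' Ioi m).Finite) :
    ∃ B : Set ℕ, B.Infinite ∧ IsMinHomogeneous c B := by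
  refine ⟨range (pivot hc), infinite_range_of_injective (strictMono_pivot hc).injective, ?_⟩
  rintro _ _ _ ⟨i, rfl⟩ ⟨j, rfl⟩ ⟨j', rfl⟩ hij hij'
  rw [apply_pivot_pivot hc ((strictMono_pivot hc).lt_iff_lt.mp hij),
    apply_pivot_pivot hc ((strictMono_pivot hc).lt_iff_lt.mp hij')]

end MinHomogeneous

theorem stmt3 (g : ℕ → ℕ) (c : ℕ → ℕ → ℕ)
    (hc : ∀ m n, m < n → c m n ≤ g m) :
    ∃ B : Set ℕ, B.Infinite ∧
      ∀ m n n', m ∈ B → n ∈ B → n' ∈ B → m < n → m < n' → c m n = c m n' := by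
  have hfin : ∀ m, (c m '' Ioi m).Finite := fun m ↦
    (finite_Iic (g m)).subset (image_subset_iff.mpr fun n hn ↦ hc m n hn)
  exact MinHomogeneous.exists_infinite_isMinHomogeneous hfin
end

section
/- For every function g : ℕ → ℕ and every k, there exists N such that every g-regressive coloring c : [N]² → ℕ admits a min-homogeneous subset of N of size at least k. -/
/-- `H` is min-homogeneous for the pair coloring `c`. -/
def MinHomog (c : ℕ → ℕ → ℕ) (H : Finset ℕ) : Prop :=
  ∀ m n n', m ∈ H → n ∈ H → n' ∈ H → m < n → m < n' → c m n = c m n'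

/-- Pigeonhole: a bounded function on an infinite set has an infinite fiber. -/
lemma infinite_fiber {S : Set ℕ} (hS : S.Infinite) (f : ℕ → ℕ) (b : ℕ)
    (hf : ∀ n ∈ S, f n ≤ b) : ∃ v, {n ∈ S | f n = v}.Infinite := by
  by_contra h
  push_neg at h
  apply hS
  have hsub : S ⊆ ⋃ v ∈ Finset.range (b + 1), {n ∈ S | f n = v} := by
    intro n hn
    exact Set.mem_biUnion (Finset.mem_range.2 (Nat.lt_succ_of_le (hf n hn))) ⟨hn, rfl⟩
  exact Set.Finite.subset (Set.Finite.biUnion (Finset.range (b + 1)).finite_toSet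
    (fun v _ => h v)) hsub

/-- Infinite version: any regressive coloring has a min-homogeneous set of any
finite size inside any infinite set. -/
lemma key (g : ℕ → ℕ) (c : ℕ → ℕ → ℕ) (hreg : ∀ m n, m < n → c m n ≤ g m) :
    ∀ k (S : Set ℕ), S.Infinite →
      ∃ H : Finset ℕ, ↑H ⊆ S ∧ H.card = k ∧ MinHomog c H := by
  intro k
  induction k with
  | zero =>
    intro S _
    exact ⟨∅, by simp, rfl, fun m n n' hm => by simp at hm⟩
  | succ k ih =>
    intro S hS
    obtain ⟨a, ha⟩ := hS.nonempty
    have hS' : (S \ Set.Iic a).Infinite := hS.diff (Set.finite_Iic a)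
    obtain ⟨v, hv⟩ := infinite_fiber hS' (c a) (g a)
      (fun n hn => hreg a n (by simpa using (Set.mem_diff n).1 hn |>.2))
    obtain ⟨H, hHT, hcard, hmh⟩ := ih _ hv
    have hHgt : ∀ x ∈ H, a < x := by
      intro x hx
      have := hHT hx
      simp only [Set.mem_setOf_eq, Set.mem_diff, Set.mem_Iic] at this
      omega
    have haH : a ∉ H := fun h => lt_irrefl a (hHgt a h)
    refine ⟨insert a H, ?_, ?_, ?_⟩
    · intro x hx
      rcases Finset.mem_insert.1 hx with rfl | hx
      · exact ha
      · exact ((hHT hx).1).1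
    · rw [Finset.card_insert_of_notMem haH, hcard]
    · intro m n n' hm hn hn' hmn hmn'
      have hcol : ∀ x ∈ H, c a x = v := fun x hx => (hHT hx).2
      rcases Finset.mem_insert.1 hm with rfl | hm
      · have hnH : n ∈ H := by
          rcases Finset.mem_insert.1 hn with rfl | h
          · omega
          · exact h
        have hn'H : n' ∈ H := by
          rcases Finset.mem_insert.1 hn' with rfl | h
          · omega
          · exact h
        rw [hcol n hnH, hcol n' hn'H]
      · have ham : a < m := hHgt m hm
        have hnH : n ∈ H := by
          rcases Finset.mem_insert.1 hn with rfl | h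
          · omega
          · exact h
        have hn'H : n' ∈ H := by
          rcases Finset.mem_insert.1 hn' with rfl | h
          · omega
          · exact h
        exact hmh m n n' hm hnH hn'H hmn hmn'

theorem stmt4 (g : ℕ → ℕ) (k : ℕ) :
    ∃ N : ℕ, ∀ c : ℕ → ℕ → ℕ, (∀ m n, m < n → c m n ≤ g m) →
      ∃ H : Finset ℕ, H ⊆ Finset.range N ∧ k ≤ H.card ∧ MinHomog c H := by
  by_contra h
  push_neg at h
  choose C hreg hbad using h
  -- normalized colorings, bounded everywhere
  set D : ℕ → ℕ → ℕ → ℕ := fun N m n => if m < n then C N m n else 0 with hDdef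
  have hD : ∀ N m n, D N m n ≤ g m := by
    intro N m n
    simp only [hDdef]
    split
    · exact hreg N m n ‹_›
    · exact Nat.zero_le _
  set U : Ultrafilter ℕ := Filter.hyperfilter ℕ with hU
  have hlim : ∀ m n, ∃ v, {N | D N m n = v} ∈ U := by
    intro m n
    have hcover : (Set.univ : Set ℕ) ⊆ ⋃ v ∈ Finset.range (g m + 1), {N | D N m n = v} := by
      intro N _
      exact Set.mem_biUnion (Finset.mem_range.2 (Nat.lt_succ_of_le (hD N m n))) rfl
    have hmem : (⋃ v ∈ (Finset.range (g m + 1) : Set ℕ), {N | D N m n = v}) ∈ U := by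
      refine Filter.mem_of_superset Filter.univ_mem ?_
      simpa using hcover
    obtain ⟨v, _, hv⟩ := (Ultrafilter.finite_biUnion_mem_iff
      (Finset.range (g m + 1)).finite_toSet).1 hmem
    exact ⟨v, hv⟩
  set c : ℕ → ℕ → ℕ := fun m n => Classical.choose (hlim m n) with hcdef
  have hc : ∀ m n, {N | D N m n = c m n} ∈ U := fun m n => Classical.choose_spec (hlim m n)
  have hcreg : ∀ m n, m < n → c m n ≤ g m := by
    intro m n hmn
    obtain ⟨N, hN⟩ := Ultrafilter.nonempty_of_mem (hc m n)
    rw [← hN]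
    exact hD N m n
  obtain ⟨H, _, hcard, hmh⟩ := key g c hcreg k Set.univ Set.infinite_univ
  -- the set of N on which D N agrees with c on all pairs from H
  have hagree : (⋂ m ∈ H, ⋂ n ∈ H, {N | D N m n = c m n}) ∈ U := by
    refine (Filter.biInter_finset_mem H).2 fun m _ => ?_
    exact (Filter.biInter_finset_mem H).2 fun n _ => hc m n
  have hbig : {N : ℕ | ∀ x ∈ H, x < N} ∈ U := by
    apply Filter.hyperfilter_le_cofinite
    rw [Nat.cofinite_eq_atTop]
    rcases H.eq_empty_or_nonempty with rfl | hne
    · simp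
    · refine Filter.mem_of_superset (Filter.mem_atTop (H.max' hne + 1)) ?_
      intro N hN x hx
      have h1 : H.max' hne + 1 ≤ N := hN
      have := Finset.le_max' H x hx
      omega
  obtain ⟨N, hN⟩ := Ultrafilter.nonempty_of_mem (Filter.inter_mem hagree hbig)
  obtain ⟨hN1, hN2⟩ := hN
  simp only [Set.mem_iInter, Set.mem_setOf_eq] at hN1 hN2
  refine hbad N H (fun x hx => Finset.mem_range.2 (hN2 x hx)) (le_of_eq hcard.symm) ?_
  intro m n n' hm hn hn' hmn hmn'
  have e1 : C N m n = c m n := by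
    have := hN1 m hm n hn
    simp only [hDdef, if_pos hmn] at this
    exact this
  have e2 : C N m n' = c m n' := by
    have := hN1 m hm n' hn'
    simp only [hDdef, if_pos hmn'] at this
    exact this
  rw [e1, e2]
  exact hmh m n n' hm hn hn' hmn hmn'
end

section
/- Let g(n) ≤ n^(1/β(n)) with g, β weakly increasing, β unbounded, β⁻¹ bounded by a primitive recursive function, and g primitive recursive. Then the function ν_g(k) = the least N such that every g-regressive coloring of [N]² has a min-homogeneous set of size k, is primitive recursive. -/
/-- Floor of the real `t`-th root of `n`. -/
noncomputable def nroot (t n : ℕ) : ℕ := ⌊(n : ℝ) ^ ((t : ℝ)⁻¹)⌋₊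

/-- `N →min (k)_g`: every `g`-regressive coloring of pairs below `N` has a
min-homogeneous set of size `k`. -/
def Good (g : ℕ → ℕ) (k N : ℕ) : Prop :=
  ∀ c : ℕ → ℕ → ℕ, (∀ m n, m < n → c m n ≤ g m) →
    ∃ H : Finset ℕ, H ⊆ Finset.range N ∧ H.card = k ∧ MinHomog c H

/-!
With colors at most `G`, any set of `(G + 2) ^ k` numbers contains a min-homogeneous `k`-set:
keep its minimum `m`, pass by pigeonhole to a largest class of the colors `c m x`, and recurse.
For `N = (p (2k) + 3 ^ k) ^ 2` the hypotheses give `β N ≥ 2k`, hence `g N ≤ N ^ (1 / 2k)` and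
`(g N + 2) ^ k ≤ N`, so `ν k ≤ N` is bounded primitive recursively.

Whether `N →min (k)_g` holds is a bounded search: a coloring of pairs below `N` may be clipped at
`g N`, so it is coded by a number below `(g N + 1) ^ (N * N)`, and a min-homogeneous `k`-set by its
increasing enumeration, coded in base `N`. Hence the graph of `ν` is primitive recursive, and so is
`ν` itself, being primitive recursively bounded.
-/

theorem pow_nroot_le {t : ℕ} (ht : t ≠ 0) (n : ℕ) : nroot t n ^ t ≤ n := by
  have key : ((nroot t n : ℕ) : ℝ) ^ t ≤ n :=
    calc ((nroot t n : ℕ) : ℝ) ^ t ≤ ((n : ℝ) ^ (t : ℝ)⁻¹) ^ t := by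
          gcongr; exact Nat.floor_le (by positivity)
      _ = n := Real.rpow_inv_natCast_pow (Nat.cast_nonneg n) ht
  exact_mod_cast key

theorem pow_nroot_le_of_le {s t n : ℕ} (hst : s ≤ t) (hn : 1 ≤ n) : nroot t n ^ s ≤ n := by
  rcases Nat.eq_zero_or_pos s with rfl | hs
  · simpa using hn
  rcases Nat.eq_zero_or_pos (nroot t n) with h0 | h0
  · simp [h0, hs.ne']
  · exact (Nat.pow_le_pow_right h0 hst).trans (pow_nroot_le (by omega) n)

theorem add_two_pow_le_sq {a k A : ℕ} (ha : a ^ (2 * k) ≤ A ^ 2) (hA : 3 ^ k ≤ A) :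
    (a + 2) ^ k ≤ A ^ 2 := by
  have hak : a ^ k ≤ A := by
    rw [mul_comm, pow_mul] at ha
    exact (Nat.pow_le_pow_iff_left two_ne_zero).1 ha
  have hmax : max a 1 ^ k ≤ A := by
    rcases le_total a 1 with h | h
    · rw [max_eq_right h, one_pow]; exact Nat.one_le_pow _ _ (by norm_num) |>.trans hA
    · rwa [max_eq_left h]
  calc (a + 2) ^ k ≤ (3 * max a 1) ^ k := by gcongr; omega
    _ = 3 ^ k * max a 1 ^ k := mul_pow _ _ _
    _ ≤ A * A := Nat.mul_le_mul hA hmax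
    _ = A ^ 2 := (sq A).symm

theorem MinHomog.insert_of_lt {c : ℕ → ℕ → ℕ} {H : Finset ℕ} {m v : ℕ}
    (hH : MinHomog c H) (hm : ∀ x ∈ H, m < x) (hv : ∀ x ∈ H, c m x = v) :
    MinHomog c (insert m H) := by
  have mem_of_gt : ∀ a ∈ insert m H, ∀ x ∈ insert m H, a < x → x ∈ H := by
    intro a ha x hx hax
    refine Finset.mem_of_mem_insert_of_ne hx ?_
    rintro rfl
    rcases Finset.mem_insert.1 ha with rfl | ha
    · exact lt_irrefl _ hax
    · exact lt_asymm hax (hm a ha)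
  intro a n n' ha hn hn' han han'
  have hnH := mem_of_gt a ha n hn han
  have hn'H := mem_of_gt a ha n' hn' han'
  rcases Finset.mem_insert.1 ha with rfl | haH
  · rw [hv n hnH, hv n' hn'H]
  · exact hH a n n' haH hnH hn'H han han'

theorem exists_minHomog_of_pow_le (c : ℕ → ℕ → ℕ) (G k : ℕ) (S : Finset ℕ)
    (hS : ∀ x ∈ S, ∀ y ∈ S, x < y → c x y ≤ G) (hcard : (G + 2) ^ k ≤ S.card) :
    ∃ H ⊆ S, H.card = k ∧ MinHomog c H := by
  induction k generalizing S with
  | zero => exact ⟨∅, Finset.empty_subset _, rfl, by simp [MinHomog]⟩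
  | succ k ih =>
    have hne : S.Nonempty := Finset.card_pos.1 (lt_of_lt_of_le (by positivity) hcard)
    set m := S.min' hne
    have hmS : m ∈ S := S.min'_mem hne
    have hgt : ∀ x ∈ S.erase m, m < x := fun x hx =>
      lt_of_le_of_ne (S.min'_le x (Finset.mem_of_mem_erase hx)) (Finset.ne_of_mem_erase hx).symm
    have hcol : ∀ x ∈ S.erase m, c m x ∈ Finset.range (G + 1) := fun x hx =>
      Finset.mem_range.2 (Nat.lt_succ_of_le (hS m hmS x (Finset.mem_of_mem_erase hx) (hgt x hx)))
    have hfib : (Finset.range (G + 1)).card * (G + 2) ^ k ≤ (S.erase m).card := by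
      rw [Finset.card_erase_of_mem hmS, Finset.card_range]
      have hsplit : (G + 2) ^ (k + 1) = (G + 1) * (G + 2) ^ k + (G + 2) ^ k := by ring
      have : 1 ≤ (G + 2) ^ k := Nat.one_le_pow _ _ (by omega)
      omega
    obtain ⟨v, -, hv⟩ := Finset.exists_le_card_fiber_of_mul_le_card_of_maps_to hcol
      ⟨0, by simp⟩ hfib
    set T := (S.erase m).filter (fun x => c m x = v)
    have hTS : T ⊆ S := (Finset.filter_subset _ _).trans (Finset.erase_subset _ _)
    obtain ⟨H, hHT, hHcard, hH⟩ := ih T (fun x hx y hy => hS x (hTS hx) y (hTS hy)) hv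
    have hmH : ∀ x ∈ H, m < x := fun x hx => hgt x (Finset.mem_of_mem_filter x (hHT hx))
    refine ⟨insert m H, Finset.insert_subset hmS (hHT.trans hTS), ?_, ?_⟩
    · rw [Finset.card_insert_of_notMem (fun h => lt_irrefl m (hmH m h)), hHcard]
    · exact hH.insert_of_lt hmH fun x hx => (Finset.mem_filter.1 (hHT hx)).2

theorem good_of_pow_le {g : ℕ → ℕ} (hg : Monotone g) {k N : ℕ} (h : (g N + 2) ^ k ≤ N) :
    Good g k N := by
  intro c hc
  refine exists_minHomog_of_pow_le c (g N) k (Finset.range N) (fun x hx y hy hxy => ?_)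
    (by simpa using h)
  exact (hc x y hxy).trans (hg (Finset.mem_range.1 hx).le)

theorem good_sq_bound {g β p : ℕ → ℕ} (hg : Monotone g) (hβ : Monotone β)
    (hgb : ∀ n, g n ≤ nroot (β n) n) (hpinv : ∀ t, ∃ n, n ≤ p t ∧ t ≤ β n) (k : ℕ) :
    Good g k ((p (2 * k) + 3 ^ k) ^ 2) := by
  set A := p (2 * k) + 3 ^ k
  have hA : 1 ≤ A := le_add_left (Nat.one_le_pow _ _ (by norm_num))
  obtain ⟨n, hnp, hnβ⟩ := hpinv (2 * k)
  have hnN : n ≤ A ^ 2 := hnp.trans ((Nat.le_add_right _ _).trans (Nat.le_self_pow two_ne_zero A))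
  have hroot : nroot (β (A ^ 2)) (A ^ 2) ^ (2 * k) ≤ A ^ 2 :=
    pow_nroot_le_of_le (hnβ.trans (hβ hnN)) (Nat.one_le_pow _ _ hA)
  apply good_of_pow_le hg
  calc (g (A ^ 2) + 2) ^ k ≤ (nroot (β (A ^ 2)) (A ^ 2) + 2) ^ k := by gcongr; exact hgb _
    _ ≤ A ^ 2 := add_two_pow_le_sq hroot (Nat.le_add_left _ _)

def digit (b x i : ℕ) : ℕ := x / b ^ i % b

theorem exists_lt_pow_digit_eq {b n : ℕ} (f : ℕ → ℕ) (hf : ∀ i < n, f i < b) :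
    ∃ x < b ^ n, ∀ i < n, digit b x i = f i := by
  induction n with
  | zero => exact ⟨0, by simp, fun i hi => absurd hi (Nat.not_lt_zero i)⟩
  | succ n ih =>
    obtain ⟨x, hx, hxf⟩ := ih fun i hi => hf i (by omega)
    have hfn := hf n (by omega)
    have hb : 0 < b := by omega
    refine ⟨x + b ^ n * f n, ?_, fun i hi => ?_⟩
    · calc x + b ^ n * f n < b ^ n * (f n + 1) := by rw [mul_add_one]; omega
        _ ≤ b ^ n * b := Nat.mul_le_mul_left _ hfn
        _ = b ^ (n + 1) := (pow_succ b n).symm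
    rcases Nat.lt_succ_iff_lt_or_eq.1 hi with hi | rfl
    · obtain ⟨d, rfl⟩ := Nat.exists_eq_add_of_lt hi
      have hdiv : (x + b ^ (i + d + 1) * f (i + d + 1)) / b ^ i
          = x / b ^ i + b * (b ^ d * f (i + d + 1)) := by
        rw [show b ^ (i + d + 1) * f (i + d + 1) = b ^ i * (b * (b ^ d * f (i + d + 1))) by ring,
          Nat.add_mul_div_left _ _ (by positivity)]
      rw [digit, hdiv, Nat.add_mul_mod_self_left]
      exact hxf i hi
    · rw [digit, Nat.add_mul_div_left _ _ (by positivity), Nat.div_eq_of_lt hx, zero_add,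
        Nat.mod_eq_of_lt hfn]

/-- Comparing each color with the one towards the next element, rather than with all others,
keeps this to two bounded quantifiers. -/
def IsMinHomogSeq (c : ℕ → ℕ → ℕ) (k : ℕ) (s : ℕ → ℕ) : Prop :=
  ∀ j < k, ∀ i < j, s i < s j ∧ c (s i) (s j) = c (s i) (s (i + 1))

namespace IsMinHomogSeq

variable {c c' : ℕ → ℕ → ℕ} {k N : ℕ} {s t : ℕ → ℕ}

theorem strictMonoOn (hs : IsMinHomogSeq c k s) : StrictMonoOn s (Set.Iio k) :=
  fun _ _ j hj hij => (hs j hj _ hij).1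

theorem congr_seq (hs : IsMinHomogSeq c k s) (hst : ∀ i < k, s i = t i) :
    IsMinHomogSeq c k t := by
  intro j hj i hij
  rw [← hst i (hij.trans hj), ← hst j hj, ← hst (i + 1) (by omega)]
  exact hs j hj i hij

theorem congr_coloring (hs : IsMinHomogSeq c k s) (hsN : ∀ i < k, s i < N)
    (hcc' : ∀ m n, m < n → n < N → c m n = c' m n) : IsMinHomogSeq c' k s := by
  intro j hj i hij
  obtain ⟨hlt, hcol⟩ := hs j hj i hij
  have hlt' : s i < s (i + 1) := hs.strictMonoOn (hij.trans hj) (by omega : i + 1 < k) (by omega)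
  rw [← hcc' _ _ hlt (hsN j hj), ← hcc' _ _ hlt' (hsN _ (by omega))]
  exact ⟨hlt, hcol⟩

theorem minHomog_image (hs : IsMinHomogSeq c k s) :
    MinHomog c ((Finset.range k).image s) := by
  simp only [MinHomog, Finset.mem_image, Finset.mem_range]
  rintro _ _ _ ⟨i, hi, rfl⟩ ⟨j, hj, rfl⟩ ⟨j', hj', rfl⟩ hij hij'
  rw [hs.strictMonoOn.lt_iff_lt hi hj] at hij
  rw [hs.strictMonoOn.lt_iff_lt hi hj'] at hij'
  rw [(hs j hj i hij).2, (hs j' hj' i hij').2]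

end IsMinHomogSeq

theorem exists_minHomog_iff_exists_seq {c : ℕ → ℕ → ℕ} {k N : ℕ} :
    (∃ H ⊆ Finset.range N, H.card = k ∧ MinHomog c H) ↔
      ∃ s : ℕ → ℕ, (∀ i < k, s i < N) ∧ IsMinHomogSeq c k s := by
  constructor
  · rintro ⟨H, hHN, hcard, hH⟩
    let e := H.orderEmbOfFin hcard
    refine ⟨fun i => if hi : i < k then e ⟨i, hi⟩ else 0, fun i hi => ?_, fun j hj i hij => ?_⟩
    · simpa [hi] using hHN (H.orderEmbOfFin_mem hcard ⟨i, hi⟩)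
    · have hlt : ∀ {a b : ℕ} (ha : a < k) (hb : b < k), a < b → e ⟨a, ha⟩ < e ⟨b, hb⟩ :=
        fun ha hb hab => e.strictMono (Fin.mk_lt_mk.2 hab)
      have hi : i < k := hij.trans hj
      have hi1 : i + 1 < k := by omega
      simp only [hj, hi, hi1, dite_true]
      exact ⟨hlt hi hj hij, hH _ _ _ (H.orderEmbOfFin_mem hcard _) (H.orderEmbOfFin_mem hcard _)
        (H.orderEmbOfFin_mem hcard _) (hlt hi hj hij) (hlt hi hi1 (Nat.lt_succ_self i))⟩
  · rintro ⟨s, hsN, hs⟩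
    refine ⟨(Finset.range k).image s, ?_, ?_, hs.minHomog_image⟩
    · simpa [Finset.subset_iff] using hsN
    · rw [Finset.card_image_of_injOn (hs.strictMonoOn.injOn.mono (by simp)), Finset.card_range]

/-- Clipping at `g m` makes every code a `g`-regressive coloring. -/
def codedColoring (g : ℕ → ℕ) (N e m n : ℕ) : ℕ := min (digit (g N + 1) e (N * m + n)) (g m)

def GoodCoded (g : ℕ → ℕ) (k N : ℕ) : Prop :=
  ∀ e < (g N + 1) ^ (N * N), ∃ h < N ^ k, IsMinHomogSeq (codedColoring g N e) k (digit N h)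

theorem exists_codedColoring_eq {g : ℕ → ℕ} {c : ℕ → ℕ → ℕ} (hg : Monotone g)
    (hc : ∀ m n, m < n → c m n ≤ g m) (N : ℕ) :
    ∃ e < (g N + 1) ^ (N * N), ∀ m n, m < n → n < N → codedColoring g N e m n = c m n := by
  obtain ⟨e, he, hdigit⟩ := exists_lt_pow_digit_eq (b := g N + 1) (n := N * N)
    (fun i => min (c (i / N) (i % N)) (g N)) fun i _ => Nat.lt_succ_of_le (min_le_right _ _)
  refine ⟨e, he, fun m n hmn hnN => ?_⟩
  have hN : 0 < N := by omega
  have hidx : N * m + n < N * N := by nlinarith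
  have hcm : c m n ≤ g m := hc m n hmn
  have hgm : g m ≤ g N := hg (by omega)
  rw [codedColoring, hdigit _ hidx, Nat.mul_add_div hN, Nat.mul_add_mod,
    Nat.div_eq_of_lt hnN, Nat.mod_eq_of_lt hnN, add_zero]
  omega

theorem good_iff_goodCoded {g : ℕ → ℕ} (hg : Monotone g) {k N : ℕ} :
    Good g k N ↔ GoodCoded g k N := by
  constructor
  · intro hgood e _
    obtain ⟨s, hsN, hs⟩ := exists_minHomog_iff_exists_seq.1
      (hgood (codedColoring g N e) fun m n _ => min_le_right _ _)
    obtain ⟨h, hh, hdigit⟩ := exists_lt_pow_digit_eq s hsN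
    exact ⟨h, hh, hs.congr_seq fun i hi => (hdigit i hi).symm⟩
  · intro hcoded c hc
    obtain ⟨e, he, hec⟩ := exists_codedColoring_eq hg hc N
    obtain ⟨h, hh, hs⟩ := hcoded e he
    have hsN : ∀ i < k, digit N h i < N := fun i hi => Nat.mod_lt _ <| Nat.pos_of_ne_zero <| by
      rintro rfl
      rw [zero_pow (by omega)] at hh
      omega
    exact exists_minHomog_iff_exists_seq.2 ⟨_, hsN, hs.congr_coloring hsN hec⟩

theorem PrimrecRel.forall_lt_bound {α : Type*} [Primcodable α] {R : α → ℕ → Prop} {f : α → ℕ}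
    (hR : PrimrecRel R) (hf : Primrec f) : PrimrecPred fun a => ∀ x < f a, R a x :=
  (hR.swap.forall_mem_list.comp (Primrec.list_range.comp hf) Primrec.id).of_eq (by simp)

theorem PrimrecRel.exists_lt_bound {α : Type*} [Primcodable α] {R : α → ℕ → Prop} {f : α → ℕ}
    (hR : PrimrecRel R) (hf : Primrec f) : PrimrecPred fun a => ∃ x < f a, R a x :=
  (hR.swap.exists_mem_list.comp (Primrec.list_range.comp hf) Primrec.id).of_eq (by simp)

theorem Primrec.nat_pow : Primrec₂ ((· ^ ·) : ℕ → ℕ → ℕ) :=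
  Primrec₂.unpaired'.1 Nat.Primrec.pow

section

variable {α : Type*} [Primcodable α]

theorem Primrec.digit {b x i : α → ℕ} (hb : Primrec b) (hx : Primrec x) (hi : Primrec i) :
    Primrec fun a => digit (b a) (x a) (i a) :=
  Primrec.nat_mod.comp (Primrec.nat_div.comp hx (Primrec.nat_pow.comp hb hi)) hb

theorem Primrec.codedColoring {g : ℕ → ℕ} (hg : Primrec g) {N e m n : α → ℕ} (hN : Primrec N)
    (he : Primrec e) (hm : Primrec m) (hn : Primrec n) :
    Primrec fun a => codedColoring g (N a) (e a) (m a) (n a) :=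
  Primrec.nat_min.comp
    (Primrec.digit (Primrec.succ.comp (hg.comp hN)) he
      (Primrec.nat_add.comp (Primrec.nat_mul.comp hN hm) hn))
    (hg.comp hm)

end

open Primrec in
theorem primrecRel_goodCoded {g : ℕ → ℕ} (hg : Primrec g) : PrimrecRel (GoodCoded g) := by
  -- the bound variables are packed as `(((((k, N), e), h), j), i)`
  have hN : Primrec fun z : ((((ℕ × ℕ) × ℕ) × ℕ) × ℕ) × ℕ => z.1.1.1.1.2 :=
    snd.comp (fst.comp (fst.comp (fst.comp fst)))
  have hs {f : ((((ℕ × ℕ) × ℕ) × ℕ) × ℕ) × ℕ → ℕ} (hf : Primrec f) :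
      Primrec fun z => digit z.1.1.1.1.2 z.1.1.2 (f z) :=
    Primrec.digit hN (snd.comp (fst.comp fst)) hf
  have hcol {f : ((((ℕ × ℕ) × ℕ) × ℕ) × ℕ) × ℕ → ℕ} (hf : Primrec f) :=
    Primrec.codedColoring hg hN (snd.comp (fst.comp (fst.comp fst))) (hs snd) (hs hf)
  have step := (nat_lt.comp (hs snd) (hs (snd.comp fst))).and
    (Primrec.eq.comp (hcol (snd.comp fst)) (hcol (succ.comp snd)))
  have seq := (step.primrecRel.forall_lt_bound snd).primrecRel.forall_lt_bound
    (fst.comp (fst.comp fst))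
  have code := seq.primrecRel.exists_lt_bound (nat_pow.comp (snd.comp fst) (fst.comp fst))
  exact code.primrecRel.forall_lt_bound
    (nat_pow.comp (succ.comp (hg.comp snd)) (nat_mul.comp snd snd))

theorem IsLeast.eq_iff {α : Type*} [LinearOrder α] {S : Set α} {a b : α} (h : IsLeast S a) :
    a = b ↔ b ∈ S ∧ ∀ c < b, c ∉ S := by
  constructor
  · rintro rfl
    exact ⟨h.1, fun c hc hcS => (h.2 hcS).not_gt hc⟩
  · rintro ⟨hb, hmin⟩
    exact le_antisymm (h.2 hb) (not_lt.1 fun hab => hmin a hab h.1)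

theorem stmt5 (g β : ℕ → ℕ) (hg : Monotone g) (hβ : Monotone β)
    (hgb : ∀ n, g n ≤ nroot (β n) n)
    (p : ℕ → ℕ) (hp : Nat.Primrec p) (hpinv : ∀ t, ∃ n, n ≤ p t ∧ t ≤ β n)
    (hgpr : Nat.Primrec g)
    (ν : ℕ → ℕ) (hν : ∀ k, Good g k (ν k) ∧ ∀ N, Good g k N → ν k ≤ N) :
    Nat.Primrec ν := by
  have hgood : PrimrecRel (Good g) :=
    (primrecRel_goodCoded (Primrec.nat_iff.2 hgpr)).of_eq fun _ _ => (good_iff_goodCoded hg).symm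
  have hminimal : PrimrecRel fun k N => Good g k N ∧ ∀ M < N, ¬Good g k M :=
    hgood.and <| (hgood.not.comp (Primrec.fst.comp Primrec.fst) Primrec.snd).primrecRel
      |>.forall_lt_bound Primrec.snd
  have hgraph : PrimrecRel fun k N => ν k = N := hminimal.of_eq fun k N =>
    (IsLeast.eq_iff ⟨(hν k).1, fun M hM => (hν k).2 M hM⟩).symm
  have hB : Primrec fun k => (p (2 * k) + 3 ^ k) ^ 2 :=
    Primrec.nat_pow.comp (Primrec.nat_add.comp
      ((Primrec.nat_iff.2 hp).comp (Primrec.nat_mul.comp (Primrec.const 2) Primrec.id))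
      (Primrec.nat_pow.comp (Primrec.const 3) Primrec.id)) (Primrec.const 2)
  have hbound : Primrec.PrimrecBounded ν :=
    ⟨_, hB, fun k => (hν k).2 _ (good_sq_bound hg hβ hgb hpinv k)⟩
  exact Primrec.nat_iff.1 (Primrec.of_graph hbound hgraph)
end

section
/- Define for fixed t ≥ 1 the functions (f_t)_1(n) = n+1 and (f_t)_{i+1}(n) = (f_t)_i iterated ⌊n^(1/t)⌋ times applied to n. Then for all t, k, n > 0, (f_t)_k(n) ≥ n + ⌊n^(1/t)⌋^(k-1). -/
/-- `(f_t)_i`: `(f_t)_1 (n) = n + 1`, `(f_t)_{i+1} (n) = (f_t)_i^(⌊n^(1/t)⌋) (n)`. -/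
noncomputable def ft (t : ℕ) : ℕ → ℕ → ℕ
  | 0, n => n
  | 1, n => n + 1
  | (i + 2), n => (ft t (i + 1))^[nroot t n] n

lemma nroot_mono (t : ℕ) {m n : ℕ} (h : m ≤ n) : nroot t m ≤ nroot t n := by
  apply Nat.floor_le_floor
  exact Real.rpow_le_rpow (by positivity) (by exact_mod_cast h) (by positivity)

theorem stmt6 (t k n : ℕ) (ht : 0 < t) (hk : 0 < k) (hn : 0 < n) :
    n + (nroot t n) ^ (k - 1) ≤ ft t k n := by
  induction k generalizing n with
  | zero => omega
  | succ j ih =>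
    match j with
    | 0 => simp [ft]
    | j + 1 =>
      show n + nroot t n ^ (j + 1) ≤ (ft t (j + 1))^[nroot t n] n
      have key : ∀ i, n + i * nroot t n ^ j ≤ (ft t (j + 1))^[i] n := by
        intro i
        induction i with
        | zero => simp
        | succ i ihh =>
          rw [Function.iterate_succ_apply']
          set m := (ft t (j + 1))^[i] n with hm
          have hmn : n ≤ m := le_trans (Nat.le_add_right _ _) ihh
          have h1 := ih m (by omega) (by omega)
          have h2 : nroot t n ≤ nroot t m := nroot_mono t hmn
          have h3 : nroot t n ^ j ≤ nroot t m ^ j := Nat.pow_le_pow_left h2 j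
          simp only [Nat.add_sub_cancel] at h1
          calc n + (i + 1) * nroot t n ^ j ≤ m + nroot t n ^ j := by nlinarith
            _ ≤ ft t (j + 1) m := by omega
      have hkey := key (nroot t n)
      have hpow : nroot t n * nroot t n ^ j = nroot t n ^ (j + 1) :=
        (pow_succ' _ _).symm
      omega
end

section
/- With (f_t)_i defined by (f_t)_1(n) = n+1 and (f_t)_{i+1}(n) = (f_t)_i^(⌊n^(1/t)⌋)(n): for every t ≥ 1, every i ≥ 1, and every n > 2^t, (f_{t+1})_{i+2t+2}(n²) > ((f_t)_i(n))². -/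
lemma ft_two_eq (t i n : ℕ) : ft t (i + 2) n = (ft t (i + 1))^[nroot t n] n := rfl

lemma nroot_pow_le (t n : ℕ) (ht : 1 ≤ t) : nroot t n ^ t ≤ n := by
  have ht' : (t : ℝ) ≠ 0 := by
    have : 0 < t := ht
    exact_mod_cast this.ne'
  have h0 : (0:ℝ) ≤ (n:ℝ) ^ ((t:ℝ)⁻¹) := Real.rpow_nonneg (Nat.cast_nonneg n) _
  have h1 : ((nroot t n : ℕ) : ℝ) ≤ (n:ℝ) ^ ((t:ℝ)⁻¹) := Nat.floor_le h0
  have h2 : ((nroot t n : ℕ) : ℝ) ^ t ≤ ((n:ℝ) ^ ((t:ℝ)⁻¹)) ^ t :=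
    pow_le_pow_left₀ (Nat.cast_nonneg _) h1 t
  have h3 : ((n:ℝ) ^ ((t:ℝ)⁻¹)) ^ t = (n:ℝ) := by
    rw [← Real.rpow_natCast ((n:ℝ) ^ ((t:ℝ)⁻¹)) t, ← Real.rpow_mul (Nat.cast_nonneg n),
      inv_mul_cancel₀ ht', Real.rpow_one]
  rw [h3] at h2
  exact_mod_cast h2

lemma le_nroot (t n k : ℕ) (ht : 1 ≤ t) (h : k ^ t ≤ n) : k ≤ nroot t n := by
  have ht' : (t : ℝ) ≠ 0 := by
    have : 0 < t := ht
    exact_mod_cast this.ne'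
  apply Nat.le_floor
  have hle : ((k:ℝ) ^ t) ^ ((t:ℝ)⁻¹) ≤ (n:ℝ) ^ ((t:ℝ)⁻¹) :=
    Real.rpow_le_rpow (by positivity) (by exact_mod_cast h) (by positivity)
  calc (k:ℝ) = ((k:ℝ) ^ t) ^ ((t:ℝ)⁻¹) := by
        rw [← Real.rpow_natCast (k:ℝ) t, ← Real.rpow_mul (Nat.cast_nonneg k),
          mul_inv_cancel₀ ht', Real.rpow_one]
    _ ≤ (n:ℝ) ^ ((t:ℝ)⁻¹) := hle

lemma lt_nroot_succ_pow (t n : ℕ) (ht : 1 ≤ t) : n < (nroot t n + 1) ^ t := by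
  have ht' : (t : ℝ) ≠ 0 := by
    have : 0 < t := ht
    exact_mod_cast this.ne'
  have h0 : (0:ℝ) ≤ (n:ℝ) ^ ((t:ℝ)⁻¹) := Real.rpow_nonneg (Nat.cast_nonneg n) _
  have h1 : (n:ℝ) ^ ((t:ℝ)⁻¹) < (nroot t n : ℝ) + 1 := Nat.lt_floor_add_one _
  have h2 : ((n:ℝ) ^ ((t:ℝ)⁻¹)) ^ t < ((nroot t n : ℝ) + 1) ^ t :=
    pow_lt_pow_left₀ h1 h0 (by omega)
  have h3 : ((n:ℝ) ^ ((t:ℝ)⁻¹)) ^ t = (n:ℝ) := by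
    rw [← Real.rpow_natCast ((n:ℝ) ^ ((t:ℝ)⁻¹)) t, ← Real.rpow_mul (Nat.cast_nonneg n),
      inv_mul_cancel₀ ht', Real.rpow_one]
  rw [h3] at h2
  have : (n:ℝ) < (((nroot t n + 1 : ℕ)):ℝ) ^ t := by push_cast; exact h2
  exact_mod_cast this

lemma nroot_mono_s8 (t : ℕ) : Monotone (nroot t) := fun a b h =>
  Nat.floor_mono (Real.rpow_le_rpow (Nat.cast_nonneg a) (Nat.cast_le.2 h) (by positivity))

lemma le_iter (f : ℕ → ℕ) (hf : ∀ x, x ≤ f x) : ∀ (k : ℕ) (x : ℕ), x ≤ f^[k] x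
  | 0, x => le_refl x
  | (k+1), x => by
    rw [Function.iterate_succ_apply']
    exact le_trans (le_iter f hf k x) (hf _)

lemma iter_count_le (f : ℕ → ℕ) (hf : ∀ x, x ≤ f x) {k l : ℕ} (h : k ≤ l) (x : ℕ) :
    f^[k] x ≤ f^[l] x := by
  obtain ⟨d, rfl⟩ := Nat.exists_eq_add_of_le h
  rw [Nat.add_comm, Function.iterate_add_apply]
  exact le_iter f hf d _

lemma le_ft (t : ℕ) : ∀ i n, n ≤ ft t i n
  | 0, n => le_refl n
  | 1, n => Nat.le_succ n
  | (i+2), n => le_iter (ft t (i+1)) (le_ft t (i+1)) (nroot t n) n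

lemma ft_mono (t : ℕ) : ∀ i, Monotone (ft t i)
  | 0 => monotone_id
  | 1 => fun a b h => Nat.succ_le_succ h
  | (i+2) => fun a b h => by
    calc (ft t (i+1))^[nroot t a] a ≤ (ft t (i+1))^[nroot t a] b :=
          (ft_mono t (i+1)).iterate _ h
      _ ≤ (ft t (i+1))^[nroot t b] b :=
          iter_count_le _ (le_ft t (i+1)) (nroot_mono_s8 t h) b

lemma ft_one_iter (t : ℕ) : ∀ (k m : ℕ), (ft t 1)^[k] m = m + k
  | 0, m => rfl
  | (k+1), m => by
    rw [Function.iterate_succ_apply', ft_one_iter t k m]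
    rfl

lemma ftA (t' : ℕ) : ∀ j, 1 ≤ j → ∀ m, m + nroot t' m ^ j ≤ ft t' (j+1) m
  | 0, hj, m => by omega
  | 1, _, m => by
    rw [show (1+1 : ℕ) = 0 + 2 by rfl, ft_two_eq, ft_one_iter, pow_one]
  | (j+2), _, m => by
    set r := nroot t' m with hr
    have key : ∀ k, m + k * r ^ (j+1) ≤ (ft t' (j+2))^[k] m := by
      intro k
      induction k with
      | zero => simp
      | succ k ihk =>
        rw [Function.iterate_succ_apply']
        set x := (ft t' (j+2))^[k] m with hx
        have hmx : m ≤ x := le_iter _ (le_ft t' (j+2)) k m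
        have hrx : r ≤ nroot t' x := nroot_mono_s8 t' hmx
        have h1 : x + nroot t' x ^ (j+1) ≤ ft t' (j+2) x := ftA t' (j+1) (by omega) x
        have h2 : r ^ (j+1) ≤ nroot t' x ^ (j+1) := Nat.pow_le_pow_left hrx _
        have : m + (k+1) * r ^ (j+1) ≤ x + r ^ (j+1) := by nlinarith
        omega
    have := key r
    rw [show (j+2+1 : ℕ) = (j+1) + 2 by omega, ft_two_eq]
    calc m + r ^ (j+2) = m + r * r ^ (j+1) := by ring
      _ ≤ (ft t' (j+2))^[r] m := key r

theorem stmt8 (t i n : ℕ) (ht : 1 ≤ t) (hi : 1 ≤ i) (hn : 2 ^ t < n) :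
    (ft t i n) ^ 2 < ft (t + 1) (i + 2 * t + 2) (n ^ 2) := by
  induction i, hi using Nat.le_induction generalizing n with
  | base =>
    -- base case i = 1
    have h2t : 2 ≤ 2 ^ t := by
      calc (2:ℕ) = 2 ^ 1 := rfl
        _ ≤ 2 ^ t := Nat.pow_le_pow_right (by norm_num) ht
    have hn3 : 3 ≤ n := by omega
    set R := nroot (t+1) (n^2) with hR
    have hR2 : 2 ≤ R := by
      apply le_nroot _ _ _ (by omega)
      calc (2:ℕ) ^ (t+1) = 2 * 2 ^ t := by ring
        _ ≤ 2 ^ t * 2 ^ t := by nlinarith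
        _ = (2 ^ t) ^ 2 := by ring
        _ ≤ n ^ 2 := Nat.pow_le_pow_left (by omega) 2
    have hfloor : n ^ 2 < (R + 1) ^ (t+1) := lt_nroot_succ_pow (t+1) (n^2) (by omega)
    have hRbig : n ^ 2 < R ^ (2*t+2) := by
      have h1 : R + 1 ≤ R ^ 2 := by nlinarith
      have h2 : (R+1) ^ (t+1) ≤ (R ^ 2) ^ (t+1) := Nat.pow_le_pow_left h1 _
      have h3 : (R ^ 2) ^ (t+1) = R ^ (2*t+2) := by
        rw [← pow_mul]; ring_nf
      omega
    have hA : n ^ 2 + R ^ (2*t+2) ≤ ft (t+1) (2*t+2+1) (n^2) :=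
      ftA (t+1) (2*t+2) (by omega) (n^2)
    have hidx : 1 + 2*t + 2 = 2*t+2+1 := by omega
    rw [hidx]
    have hft1 : ft t 1 n = n + 1 := rfl
    rw [hft1]
    have : (n+1)^2 < n^2 + R ^ (2*t+2) := by nlinarith
    omega
  | succ i hi IH =>
    obtain ⟨j, rfl⟩ : ∃ j, i = j + 1 := ⟨i - 1, by omega⟩
    set f := ft t (j+1) with hf
    set g := ft (t+1) (j+1+2*t+2) with hg
    have hgid : ∀ x, x ≤ g x := le_ft (t+1) _
    have hfid : ∀ x, x ≤ f x := le_ft t _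
    -- orbit comparison
    have Q : ∀ k, 1 ≤ k → (f^[k] n) ^ 2 < g^[k] (n^2) := by
      intro k hk
      induction k, hk using Nat.le_induction with
      | base => simpa using IH n hn
      | succ k hk ihk =>
        rw [Function.iterate_succ_apply', Function.iterate_succ_apply']
        set m := f^[k] n with hm
        have hmn : n ≤ m := le_iter f hfid k n
        have h1 : (f m) ^ 2 < g (m^2) := IH m (by omega)
        have h2 : g (m^2) ≤ g (g^[k] (n^2)) := ft_mono (t+1) _ (by omega)
        omega
    -- root comparison
    have hs1 : 1 ≤ nroot t n := by
      apply le_nroot _ _ _ ht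
      simpa using le_trans Nat.one_le_two_pow hn.le
    have hsS : nroot t n ≤ nroot (t+1) (n^2) := by
      apply le_nroot _ _ _ (by omega)
      have h1 : nroot t n ^ t ≤ n := nroot_pow_le t n ht
      have h2 : nroot t n ≤ n := by
        calc nroot t n = nroot t n ^ 1 := (pow_one _).symm
          _ ≤ nroot t n ^ t := Nat.pow_le_pow_right hs1 ht
          _ ≤ n := h1
      calc nroot t n ^ (t+1) = nroot t n ^ t * nroot t n := by ring
        _ ≤ n * n := Nat.mul_le_mul h1 h2
        _ = n ^ 2 := by ring
    have hunfold1 : ft t (j+1+1) n = f^[nroot t n] n := rfl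
    have hunfold2 : ft (t+1) (j+1+1+2*t+2) (n^2) = g^[nroot (t+1) (n^2)] (n^2) := by
      rw [show j+1+1+2*t+2 = (j+1+2*t+1)+2 by omega, ft_two_eq]
    rw [hunfold1, hunfold2]
    calc (f^[nroot t n] n) ^ 2 < g^[nroot t n] (n^2) := Q _ hs1
      _ ≤ g^[nroot (t+1) (n^2)] (n^2) := iter_count_le g hgid hsS _
end

section
/- Let f : ℕ → ℕ⁺ with f(n) → ∞, and define g(x) = lg x / (f(x) · lg lg x) for x ≥ 4 and g(x) = 0 for x < 4. Then for every k there exists N such that every g-regressive coloring c : [N]² → ℕ admits a homogeneous subset of size k. -/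
/-- `H` is homogeneous for the pair coloring `c`. -/
def Homog (c : ℕ → ℕ → ℕ) (H : Finset ℕ) : Prop :=
  ∀ m n m' n', m ∈ H → n ∈ H → m' ∈ H → n' ∈ H → m < n → m' < n' → c m n = c m' n'

/-!
On the window `2 ^ 2 ^ s ≤ m < 2 ^ L` with `L = 2 ^ (2 * s)` we have `log m < L`,
`log log m ≥ s` and, once `s` is large, `f m ≥ 8 (k + 1)`; so every colour `c m n` with `m` in
the window is below `r = L / (8 (k + 1) s) + 1`. The window has at least `2 ^ (L - 1)` elements,
while the Ramsey bound for `r` colours is about `(r + 1) ^ (r k) ≤ 2 ^ (2 s r k) ≈ 2 ^ (L / 4)`.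
-/

open Finset

def IsMinHomog (c : ℕ → ℕ → ℕ) (T : Finset ℕ) : Prop :=
  ∀ m ∈ T, ∀ n ∈ T, ∀ n' ∈ T, m < n → m < n' → c m n = c m n'

lemma isMinHomog_insert {c : ℕ → ℕ → ℕ} {T : Finset ℕ} {a i : ℕ} (hT : IsMinHomog c T)
    (haT : ∀ x ∈ T, a < x) (hc : ∀ x ∈ T, c a x = i) : IsMinHomog c (insert a T) := by
  intro m hm n hn n' hn' hmn hmn'
  have above : ∀ x ∈ insert a T, m < x → x ∈ T := by
    intro x hx hmx
    rcases mem_insert.1 hx with rfl | hx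
    · rcases mem_insert.1 hm with rfl | hm
      · exact absurd hmx (lt_irrefl _)
      · exact absurd (haT m hm) (not_lt.2 hmx.le)
    · exact hx
  rcases mem_insert.1 hm with rfl | hm
  · rw [hc n (above n hn hmn), hc n' (above n' hn' hmn')]
  · exact hT m hm n (above n hn hmn) n' (above n' hn' hmn') hmn hmn'

/-- Greedily pick the minimum and pass to its largest colour class. -/
lemma exists_isMinHomog_of_pow_le_card (c : ℕ → ℕ → ℕ) {r : ℕ} (hr : 0 < r) (t : ℕ)
    (S : Finset ℕ) (hcol : ∀ m ∈ S, ∀ n ∈ S, m < n → c m n < r) (hcard : (r + 1) ^ t ≤ #S) :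
    ∃ T ⊆ S, #T = t ∧ IsMinHomog c T := by
  induction t generalizing S with
  | zero => exact ⟨∅, empty_subset _, rfl, by simp [IsMinHomog]⟩
  | succ t ih =>
    have hS : S.Nonempty := card_pos.1 (lt_of_lt_of_le (by positivity) hcard)
    set a := S.min' hS
    have haS : a ∈ S := S.min'_mem hS
    have ha_lt : ∀ x ∈ S.erase a, a < x := fun x hx => S.min'_lt_of_mem_erase_min' hS hx
    have hfiber : #(range r) * (r + 1) ^ t ≤ #(S.erase a) := by
      rw [pow_succ] at hcard
      rw [card_range, card_erase_of_mem haS]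
      exact Nat.le_sub_one_of_lt (by nlinarith [Nat.one_le_pow t (r + 1) (by omega)])
    obtain ⟨i, -, hi⟩ := exists_le_card_fiber_of_mul_le_card_of_maps_to
      (fun x hx => mem_range.2 (hcol a haS x (mem_of_mem_erase hx) (ha_lt x hx)))
      (nonempty_range_iff.2 hr.ne') hfiber
    have hFS : {x ∈ S.erase a | c a x = i} ⊆ S := (filter_subset _ _).trans (erase_subset _ _)
    obtain ⟨T, hTF, hTt, hT⟩ :=
      ih _ (fun m hm n hn => hcol m (hFS hm) n (hFS hn)) hi
    have hTa : ∀ x ∈ T, x ∈ S.erase a := fun x hx => mem_of_mem_filter x (hTF hx)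
    refine ⟨insert a T, insert_subset haS (hTF.trans hFS), ?_, ?_⟩
    · rw [card_insert_of_notMem fun h => notMem_erase a S (hTa a h), hTt]
    · exact isMinHomog_insert hT (fun x hx => ha_lt x (hTa x hx))
        fun x hx => (mem_filter.1 (hTF hx)).2

theorem exists_homog_of_pow_le_card (c : ℕ → ℕ → ℕ) {r k : ℕ} (hr : 0 < r) (S : Finset ℕ)
    (hcol : ∀ m ∈ S, ∀ n ∈ S, m < n → c m n < r) (hcard : (r + 1) ^ (r * k + 1) ≤ #S) :
    ∃ H ⊆ S, #H = k ∧ Homog c H := by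
  obtain ⟨T, hTS, hTcard, hT⟩ := exists_isMinHomog_of_pow_le_card c hr _ S hcol hcard
  have hT0 : T.Nonempty := card_pos.1 (by omega)
  set b := T.max' hT0
  have hbT : b ∈ T := T.max'_mem hT0
  have hlt_b : ∀ x ∈ T.erase b, x < b := fun x hx => T.lt_max'_of_mem_erase_max' hT0 hx
  -- colour each `x < b` by `c x b`, which by min-homogeneity is the colour of every pair above `x`
  obtain ⟨i, -, hi⟩ := exists_le_card_fiber_of_mul_le_card_of_maps_to (n := k)
    (fun x hx => mem_range.2 (hcol x (hTS (mem_of_mem_erase hx)) b (hTS hbT) (hlt_b x hx)))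
    (nonempty_range_iff.2 hr.ne')
    (by rw [card_range, card_erase_of_mem hbT, hTcard]; simp)
  obtain ⟨H, hHF, hHk⟩ := exists_subset_card_eq hi
  have hHT : H ⊆ T.erase b := hHF.trans (filter_subset _ _)
  have hcolor : ∀ m ∈ H, ∀ n ∈ H, m < n → c m n = i := by
    intro m hm n hn hmn
    rw [hT m (mem_of_mem_erase (hHT hm)) n (mem_of_mem_erase (hHT hn)) b hbT hmn
      (hlt_b m (hHT hm))]
    exact (mem_filter.1 (hHF hm)).2
  refine ⟨H, hHT.trans ((erase_subset _ _).trans hTS), hHk, ?_⟩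
  intro m n m' n' hm hn hm' hn' hmn hmn'
  rw [hcolor m hm n hn hmn, hcolor m' hm' n' hn' hmn']

lemma log_div_mul_log_log_le {m a A s L : ℕ} (hA : A ≤ a) (hAs : 0 < A * s)
    (hm : 2 ^ 2 ^ s ≤ m) (hmL : m < 2 ^ L) :
    Nat.log 2 m / (a * Nat.log 2 (Nat.log 2 m)) ≤ L / (A * s) := by
  have hlog : Nat.log 2 m < L := Nat.log_lt_of_lt_pow (lt_of_lt_of_le (by positivity) hm).ne' hmL
  have hloglog : s ≤ Nat.log 2 (Nat.log 2 m) :=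
    Nat.le_log_of_pow_le one_lt_two (Nat.le_log_of_pow_le one_lt_two hm)
  exact Nat.div_le_div hlog.le (Nat.mul_le_mul hA hloglog) hAs.ne'

lemma pow_mul_le_two_pow_pred {K s r : ℕ} (hK : 0 < K) (hs : 4 * K ≤ s)
    (hr : r ≤ 2 ^ (2 * s) / (8 * K * s) + 1) : (r + 1) ^ (r * K) ≤ 2 ^ (2 ^ (2 * s) - 1) := by
  set L := 2 ^ (2 * s)
  set q := L / (8 * K * s)
  have hq : q * (8 * K * s) ≤ L := Nat.div_mul_le_self L _
  have hsL : s * s < L := by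
    rw [show L = 2 ^ s * 2 ^ s by rw [← pow_add, ← two_mul]]
    exact Nat.mul_lt_mul'' s.lt_two_pow_self s.lt_two_pow_self
  have hsK : s * (4 * K) ≤ s * s := Nat.mul_le_mul_left s hs
  have hrK : s * K * r ≤ s * K * (q + 1) := Nat.mul_le_mul_left _ hr
  have hKs : 1 ≤ K * s := Nat.mul_pos hK (by omega)
  have hr1 : r + 1 ≤ L := by nlinarith
  have hexp : 2 * s * (r * K) ≤ L - 1 := by
    have : 2 * s * (r * K) < L := by nlinarith
    omega
  calc (r + 1) ^ (r * K) ≤ L ^ (r * K) := Nat.pow_le_pow_left hr1 _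
    _ = 2 ^ (2 * s * (r * K)) := by rw [← pow_mul]
    _ ≤ 2 ^ (L - 1) := Nat.pow_le_pow_right two_pos hexp

lemma two_pow_pred_le_card_Ico {a b : ℕ} (hab : a < b) : 2 ^ (b - 1) ≤ #(Ico (2 ^ a) (2 ^ b)) := by
  have hb : 2 ^ b = 2 ^ (b - 1) + 2 ^ (b - 1) := by
    rw [← two_mul, ← pow_succ', Nat.sub_add_cancel (by omega)]
  have ha : 2 ^ a ≤ 2 ^ (b - 1) := Nat.pow_le_pow_right two_pos (by omega)
  rw [Nat.card_Ico]
  omega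

theorem stmt16_general (f : ℕ → ℕ)
    (hf : Filter.Tendsto f Filter.atTop Filter.atTop)
    (g : ℕ → ℕ)
    (hgdef : ∀ x, g x = if 4 ≤ x then Nat.log 2 x / (f x * Nat.log 2 (Nat.log 2 x)) else 0)
    (k : ℕ) :
    ∃ N : ℕ, ∀ c : ℕ → ℕ → ℕ, (∀ m n, m < n → c m n ≤ g m) →
      ∃ H : Finset ℕ, H ⊆ Finset.range N ∧ H.card = k ∧ Homog c H := by
  obtain ⟨M₀, hM₀⟩ := (hf.eventually_ge_atTop (8 * (k + 1))).exists_forall_of_atTop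
  set s := max M₀ (4 * (k + 1))
  set L := 2 ^ (2 * s)
  set r := L / (8 * (k + 1) * s) + 1
  set W := Ico (2 ^ 2 ^ s) (2 ^ L)
  have hs : s < 2 ^ 2 ^ s :=
    s.lt_two_pow_self.trans (Nat.pow_lt_pow_right one_lt_two s.lt_two_pow_self)
  refine ⟨2 ^ L, fun c hc => ?_⟩
  have hcol : ∀ m ∈ W, ∀ n ∈ W, m < n → c m n < r := by
    intro m hm n _ hmn
    obtain ⟨hm_lo, hm_hi⟩ := mem_Ico.1 hm
    have hgm : g m ≤ L / (8 * (k + 1) * s) := by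
      rw [hgdef, if_pos (by omega)]
      exact log_div_mul_log_log_le (hM₀ m (by omega)) (by positivity) hm_lo hm_hi
    exact Nat.lt_succ_of_le ((hc m n hmn).trans hgm)
  have hcard : (r + 1) ^ (r * k + 1) ≤ #W :=
    calc (r + 1) ^ (r * k + 1) ≤ (r + 1) ^ (r * (k + 1)) :=
          Nat.pow_le_pow_right r.succ_pos (Nat.add_le_add_left (Nat.succ_pos _) (r * k))
      _ ≤ 2 ^ (L - 1) := pow_mul_le_two_pow_pred (by omega) (by omega) le_rfl
      _ ≤ _ := two_pow_pred_le_card_Ico (Nat.pow_lt_pow_right one_lt_two (by omega))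
  obtain ⟨H, hHS, hHk, hH⟩ := exists_homog_of_pow_le_card c (Nat.succ_pos _) _ hcol hcard
  exact ⟨H, fun x hx => mem_range.2 (mem_Ico.1 (hHS hx)).2, hHk, hH⟩

theorem stmt16 (f : ℕ → ℕ) (hf0 : ∀ n, 0 < f n)
    (hf : Filter.Tendsto f Filter.atTop Filter.atTop)
    (g : ℕ → ℕ)
    (hgdef : ∀ x, g x = if 4 ≤ x then Nat.log 2 x / (f x * Nat.log 2 (Nat.log 2 x)) else 0)
    (k : ℕ) :
    ∃ N : ℕ, ∀ c : ℕ → ℕ → ℕ, (∀ m n, m < n → c m n ≤ g m) →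
      ∃ H : Finset ℕ, H ⊆ Finset.range N ∧ H.card = k ∧ Homog c H :=
  stmt16_general f hf g hgdef k
end

section
/- For every s ≥ 2 and g(i) = lg(i)/s, there exists k (namely k = 2s+1) such that for every N there is a g-regressive coloring c : [N]² → ℕ with no homogeneous subset of size k. -/
def digitAt (b d x : ℕ) : ℕ := x / b ^ d % b

lemma mod_pow_eq_of_digitAt_eq {b m n D : ℕ} (h : ∀ d < D, digitAt b d m = digitAt b d n) :
    m % b ^ D = n % b ^ D := by
  induction D with
  | zero => simp [Nat.mod_one]
  | succ D ih =>
    have hD : m / b ^ D % b = n / b ^ D % b := h D D.lt_succ_self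
    rw [Nat.mod_pow_succ, Nat.mod_pow_succ, ih fun d hd => h d (by omega), hD]

lemma exists_digitAt_ne_of_lt_pow {b m n D : ℕ} (hm : m < b ^ D) (hn : n < b ^ D)
    (hmn : m ≠ n) : ∃ d < D, digitAt b d m ≠ digitAt b d n := by
  by_contra! h
  have := mod_pow_eq_of_digitAt_eq h
  rw [Nat.mod_eq_of_lt hm, Nat.mod_eq_of_lt hn] at this
  exact hmn this

lemma exists_digitAt_ne_lt_succ_log {b m n : ℕ} (hb : 1 < b) (hmn : m ≠ n)
    (hlog : Nat.log b m = Nat.log b n) :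
    ∃ d < Nat.log b m + 1, digitAt b d m ≠ digitAt b d n :=
  exists_digitAt_ne_of_lt_pow (Nat.lt_pow_succ_log_self hb m)
    (hlog ▸ Nat.lt_pow_succ_log_self hb n) hmn

/-- `sInf ∅ = 0` is reached only on the diagonal `m = n`. -/
noncomputable def blockColoring (b m n : ℕ) : ℕ :=
  if Nat.log b m = Nat.log b n then sInf {d | digitAt b d m ≠ digitAt b d n} else Nat.log b m

section blockColoring

variable {b m n : ℕ}

lemma blockColoring_of_log_ne (h : Nat.log b m ≠ Nat.log b n) :
    blockColoring b m n = Nat.log b m :=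
  if_neg h

lemma digitAt_blockColoring_ne (hb : 1 < b) (hmn : m ≠ n) (hlog : Nat.log b m = Nat.log b n) :
    digitAt b (blockColoring b m n) m ≠ digitAt b (blockColoring b m n) n := by
  obtain ⟨d, -, hd⟩ := exists_digitAt_ne_lt_succ_log hb hmn hlog
  rw [blockColoring, if_pos hlog]
  exact Nat.sInf_mem (s := {d | digitAt b d m ≠ digitAt b d n}) ⟨d, hd⟩

lemma blockColoring_le_log (hb : 1 < b) (m n : ℕ) : blockColoring b m n ≤ Nat.log b m := by
  unfold blockColoring
  split_ifs with hlog
  · rcases eq_or_ne m n with rfl | hmn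
    · simp
    · obtain ⟨d, hd, hne⟩ := exists_digitAt_ne_lt_succ_log hb hmn hlog
      exact Nat.lt_succ_iff.mp ((Nat.sInf_le hne).trans_lt hd)
  · exact le_rfl

end blockColoring

lemma Homog.exists_color {c : ℕ → ℕ → ℕ} {H : Finset ℕ} (hH : Homog c H) :
    ∃ v, ∀ m ∈ H, ∀ n ∈ H, m < n → c m n = v := by
  by_cases hpair : ∃ m ∈ H, ∃ n ∈ H, m < n
  · obtain ⟨m, hm, n, hn, hmn⟩ := hpair
    exact ⟨c m n, fun x hx y hy hxy => hH x y m n hx hy hm hn hxy hmn⟩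
  · exact ⟨0, fun m hm n hn hmn => (hpair ⟨m, hm, n, hn, hmn⟩).elim⟩

section HomogeneousSet

variable {b v : ℕ} {H : Finset ℕ}

lemma card_filter_log_eq_le (hb : 1 < b)
    (hv : ∀ m ∈ H, ∀ n ∈ H, m < n → blockColoring b m n = v) (w : ℕ) :
    (H.filter (Nat.log b · = w)).card ≤ b := by
  have hlt : ∀ m ∈ H, ∀ n ∈ H, m < n → Nat.log b m = w → Nat.log b n = w →
      digitAt b v m ≠ digitAt b v n := fun m hm n hn hmn hlm hln => by
    rw [← hv m hm n hn hmn]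
    exact digitAt_blockColoring_ne hb hmn.ne (hlm.trans hln.symm)
  have hinj : Set.InjOn (digitAt b v) (H.filter (Nat.log b · = w)) := by
    intro m hm n hn hdig
    simp only [Finset.coe_filter, Set.mem_ofPred_eq] at hm hn
    by_contra hmn
    rcases lt_or_gt_of_ne hmn with h | h
    · exact hlt m hm.1 n hn.1 h hm.2 hn.2 hdig
    · exact hlt n hn.1 m hm.1 h hn.2 hm.2 hdig.symm
  have hmaps : Set.MapsTo (digitAt b v) (H.filter (Nat.log b · = w)) (Finset.range b) :=
    fun x _ => Finset.mem_range.2 (Nat.mod_lt _ (by omega))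
  simpa using Finset.card_le_card_of_injOn (digitAt b v) hmaps hinj

lemma subset_filter_log_union (hv : ∀ m ∈ H, ∀ n ∈ H, m < n → blockColoring b m n = v)
    {M : ℕ} (hMH : M ∈ H) (hM : ∀ x ∈ H, x ≤ M) :
    H ⊆ H.filter (Nat.log b · = v) ∪ H.filter (Nat.log b · = Nat.log b M) := by
  intro x hx
  simp only [Finset.mem_union, Finset.mem_filter]
  by_cases hlog : Nat.log b x = Nat.log b M
  · exact Or.inr ⟨hx, hlog⟩
  · have hxM : x < M := (hM x hx).lt_of_ne (by rintro rfl; exact hlog rfl)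
    exact Or.inl ⟨hx, (blockColoring_of_log_ne hlog).symm.trans (hv x hx M hMH hxM)⟩

theorem card_le_of_homog_blockColoring (hb : 1 < b) (hH : Homog (blockColoring b) H) :
    H.card ≤ 2 * b := by
  obtain ⟨v, hv⟩ := hH.exists_color
  rcases H.eq_empty_or_nonempty with rfl | hne
  · simp
  calc H.card
      ≤ (H.filter (Nat.log b · = v) ∪ H.filter (Nat.log b · = Nat.log b (H.max' hne))).card :=
        Finset.card_le_card (subset_filter_log_union hv (H.max'_mem hne) fun x => H.le_max' x)
    _ ≤ (H.filter (Nat.log b · = v)).card +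
          (H.filter (Nat.log b · = Nat.log b (H.max' hne))).card := Finset.card_union_le _ _
    _ ≤ b + b := add_le_add (card_filter_log_eq_le hb hv _) (card_filter_log_eq_le hb hv _)
    _ = 2 * b := (two_mul b).symm

end HomogeneousSet

theorem stmt17 (s : ℕ) (hs : 2 ≤ s) (g : ℕ → ℕ) (hgdef : ∀ i, g i = Nat.log 2 i / s) :
    ∃ k : ℕ, ∀ N : ℕ, ∃ c : ℕ → ℕ → ℕ,
      (∀ m n, m < n → c m n ≤ g m) ∧
      ¬ ∃ H : Finset ℕ, H ⊆ Finset.range N ∧ H.card = k ∧ Homog c H := by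
  have hb : 1 < 2 ^ s := Nat.one_lt_two_pow (by omega)
  refine ⟨2 * 2 ^ s + 1, fun N => ⟨blockColoring (2 ^ s), fun m n _ => ?_, ?_⟩⟩
  · rw [hgdef, ← Nat.log_pow_left]
    exact blockColoring_le_log hb m n
  · rintro ⟨H, -, hcard, hH⟩
    have := card_le_of_homog_blockColoring hb hH
    omega
end

section
/- Let s ≥ 2 and define c(m,n) for m < n by: c(m,n) = ⌊log_s m⌋ if ⌊log_s m⌋ ≠ ⌊log_s n⌋, and otherwise c(m,n) = the least index i at which the base-s digit representations of m and n differ. Then every homogeneous set Y = {y_1 < ... < y_{s+1}} of size s+1 satisfies ⌊log_s y_1⌋ < ⌊log_s y_{s+1}⌋. -/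
/-- The coloring: `⌊log_s (min m n)⌋` if the logs differ, otherwise the least index
at which the base-`s` digit representations of `m` and `n` differ. -/
noncomputable def cdig (s m n : ℕ) : ℕ :=
  if Nat.log s m ≠ Nat.log s n then Nat.log s (min m n)
  else sInf {i | (Nat.digits s m).getD i 0 ≠ (Nat.digits s n).getD i 0}

theorem stmt18 (s : ℕ) (hs : 2 ≤ s) (Y : Finset ℕ) (hne : Y.Nonempty)
    (hcard : Y.card = s + 1) (hhom : Homog (cdig s) Y) :
    Nat.log s (Y.min' hne) < Nat.log s (Y.max' hne) := by
  set a := Y.min' hne with ha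
  set b := Y.max' hne with hb
  by_contra hcon
  push_neg at hcon
  have hab : a ≤ b := Y.min'_le _ (Y.max'_mem hne)
  have hlab : Nat.log s a = Nat.log s b :=
    le_antisymm (Nat.log_mono_right hab) hcon
  have hlog : ∀ y ∈ Y, Nat.log s y = Nat.log s a := by
    intro y hy
    refine le_antisymm ?_ (Nat.log_mono_right (Y.min'_le y hy))
    rw [hlab]
    exact Nat.log_mono_right (Y.le_max' y hy)
  have haY : a ∈ Y := Y.min'_mem hne
  have hbY : b ∈ Y := Y.max'_mem hne
  have hab' : a < b := Y.min'_lt_max'_of_card (by omega)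
  rcases Nat.eq_zero_or_pos (Nat.log s a) with h0 | hpos
  · have hbs : b < s := by
      have hb0 : Nat.log s b = 0 := hlab ▸ h0
      rcases (Nat.log_eq_zero_iff).1 hb0 with h | h
      · exact h
      · omega
    have hsub : Y ⊆ Finset.range s := fun y hy =>
      Finset.mem_range.2 (lt_of_le_of_lt (Y.le_max' y hy) hbs)
    have := Finset.card_le_card hsub
    rw [hcard, Finset.card_range] at this
    omega
  · have hyne : ∀ y ∈ Y, y ≠ 0 := by
      intro y hy h
      rw [h] at hy
      have := hlog 0 hy
      simp [Nat.log_zero_right] at this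
      omega
    have hlen : ∀ y ∈ Y, (Nat.digits s y).length = Nat.log s a + 1 := by
      intro y hy
      rw [Nat.digits_len s y (by omega) (hyne y hy), hlog y hy]
    -- nonemptiness of differing-digit set
    have hSne : ∀ m ∈ Y, ∀ n ∈ Y, m ≠ n →
        {i | (Nat.digits s m).getD i 0 ≠ (Nat.digits s n).getD i 0}.Nonempty := by
      intro m hm n hn hmn
      by_contra hemp
      rw [Set.not_nonempty_iff_eq_empty] at hemp
      have hall : ∀ i, (Nat.digits s m).getD i 0 = (Nat.digits s n).getD i 0 := by
        intro i
        by_contra h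
        have : i ∈ {i | (Nat.digits s m).getD i 0 ≠ (Nat.digits s n).getD i 0} := h
        rw [hemp] at this
        exact this
      have hdig : Nat.digits s m = Nat.digits s n := by
        apply List.ext_getElem (by rw [hlen m hm, hlen n hn])
        intro i h1 h2
        have := hall i
        rwa [List.getD_eq_getElem _ _ h1, List.getD_eq_getElem _ _ h2] at this
      exact hmn (by
        have := congrArg (Nat.ofDigits s) hdig
        rwa [Nat.ofDigits_digits, Nat.ofDigits_digits] at this)
    set k := cdig s a b with hk
    have hmem : ∀ m ∈ Y, ∀ n ∈ Y, m < n →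
        (Nat.digits s m).getD k 0 ≠ (Nat.digits s n).getD k 0 := by
      intro m hm n hn hmn
      have hc : cdig s m n = k := hhom m n a b hm hn haY hbY hmn hab'
      have hlmn : Nat.log s m = Nat.log s n := by rw [hlog m hm, hlog n hn]
      rw [cdig, if_neg (by simp [hlmn])] at hc
      have := Nat.sInf_mem (hSne m hm n hn (Nat.ne_of_lt hmn))
      rwa [hc] at this
    -- pigeonhole
    have hinj : Set.InjOn (fun y => (Nat.digits s y).getD k 0) Y := by
      intro x hx y hy hxy
      rcases lt_trichotomy x y with h | h | h
      · exact absurd hxy (hmem x hx y hy h)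
      · exact h
      · exact absurd hxy.symm (hmem y hy x hx h)
    have hmaps : ∀ y ∈ Y, (Nat.digits s y).getD k 0 ∈ Finset.range s := by
      intro y hy
      refine Finset.mem_range.2 ?_
      by_cases hkl : k < (Nat.digits s y).length
      · rw [List.getD_eq_getElem _ _ hkl]
        exact Nat.digits_lt_base hs (List.getElem_mem hkl)
      · rw [List.getD_eq_default _ _ (by omega)]
        omega
    have := Finset.card_le_card_of_injOn _ hmaps hinj
    rw [hcard, Finset.card_range] at this
    omega
end
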